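/- Let f : [0,1) → [0,1) be a piecewise increasing λ-contraction with finite singular set, and suppose Q = ⋃_{n≥0} f^{-n}(S) is finite. If x is a periodic point of f of period p, then the connected component W of [0,1)\S⁽ᵖ⁾ containing x satisfies f^p(W) ⊆ W, and ω(f,z) = O(f,x) for every z ∈ W. -/

import Mathlib

/-- The ω-limit set of `x` under iteration of `f`: the cluster points of the orbit. -/
def omegaSet (f : ℝ → ℝ) (x : ℝ) : Set ℝ :=
  {y | MapClusterPt y Filter.atTop fun n => f^[n] x}

/-!
On an interval of `[0,1)` containing no point of `S⁽ᵏ⁾`, the image under `f` is again an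
interval and contains no point of `S⁽ᵏ⁻¹⁾`; inductively `f^k` is monotone and
`λ^k`-Lipschitz there. For `W` the piece of `x`, `f^p` fixes `x`, preserves sides and does not
increase distances to `x`, so `f^p W ⊆ W`, and the orbit of any `z ∈ W` is shadowed by the
periodic orbit of `x` with error `λ^n |z - x|`. Hence the cluster points of `O(f,z)` are exactly
the points of the (finite) orbit of `x`.
-/

open Set Filter Topology Function

/-- `S⁽ᵏ⁾ ∩ [0,1)`. -/
def iterSingularSet (f : ℝ → ℝ) (S : Set ℝ) (k : ℕ) : Set ℝ :=
  {s | s ∈ Ico 0 1 ∧ ∃ j < k, f^[j] s ∈ S}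

/-- The piece `W` of `x` in the partition of `[0,1)` cut out by `S⁽ᵖ⁾`. -/
def pieceOf (f : ℝ → ℝ) (S : Set ℝ) (p : ℕ) (x : ℝ) : Set ℝ :=
  {y | y ∈ Ico 0 1 ∧ ∀ s ∈ iterSingularSet f S p, s ∉ uIoc x y}

def IsPiecewiseContraction (f : ℝ → ℝ) (S : Set ℝ) (lam : ℝ) : Prop :=
  ∀ x ∈ Ico (0:ℝ) 1, ∀ y ∈ Ico (0:ℝ) 1, x < y →
    (∀ s ∈ S, s ∉ Ioc x y) → f x < f y ∧ f y - f x ≤ lam * (y - x)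

section PiecewiseContraction

variable {f : ℝ → ℝ} {S : Set ℝ} {lam c d : ℝ}

theorem IsPiecewiseContraction.of_mem_Icc (hf : IsPiecewiseContraction f S lam)
    (hc : c ∈ Ico (0:ℝ) 1) (hd : d ∈ Ico (0:ℝ) 1) (hfree : ∀ s ∈ S, s ∉ Ioc c d) :
    ∀ u ∈ Icc c d, ∀ v ∈ Icc c d, u < v → f u < f v ∧ f v - f u ≤ lam * (v - u) :=
  fun u hu v hv huv => hf u ⟨hc.1.trans hu.1, hu.2.trans_lt hd.2⟩
    v ⟨hc.1.trans hv.1, hv.2.trans_lt hd.2⟩ huv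
    fun s hs hsuv => hfree s hs ⟨hu.1.trans_lt hsuv.1, hsuv.2.trans hv.2⟩

theorem IsPiecewiseContraction.strictMonoOn_Icc (hf : IsPiecewiseContraction f S lam)
    (hc : c ∈ Ico (0:ℝ) 1) (hd : d ∈ Ico (0:ℝ) 1) (hfree : ∀ s ∈ S, s ∉ Ioc c d) :
    StrictMonoOn f (Icc c d) :=
  fun u hu v hv huv => (hf.of_mem_Icc hc hd hfree u hu v hv huv).1

theorem IsPiecewiseContraction.lipschitzOnWith_Icc (hf : IsPiecewiseContraction f S lam)
    (hc : c ∈ Ico (0:ℝ) 1) (hd : d ∈ Ico (0:ℝ) 1) (hfree : ∀ s ∈ S, s ∉ Ioc c d) :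
    LipschitzOnWith lam.toNNReal f (Icc c d) := by
  refine LipschitzOnWith.of_dist_le' fun u hu v hv => ?_
  rw [Real.dist_eq, Real.dist_eq]
  rcases lt_trichotomy u v with huv | rfl | hvu
  · obtain ⟨hlt, hle⟩ := hf.of_mem_Icc hc hd hfree u hu v hv huv
    rw [abs_of_neg (by linarith), abs_of_neg (by linarith)]
    linarith
  · simp
  · obtain ⟨hlt, hle⟩ := hf.of_mem_Icc hc hd hfree v hv u hu hvu
    rw [abs_of_pos (by linarith), abs_of_pos (by linarith)]
    linarith

/-- A point `f u ∈ (f c, f d]` of `S⁽ᵏ⁾` would make `u ∈ (c, d]` a point of `S⁽ᵏ⁺¹⁾`. -/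
theorem notMem_Ioc_image_of_mem_iterSingularSet {k : ℕ} (hcd : c ≤ d)
    (hc : c ∈ Ico (0:ℝ) 1) (hd : d ∈ Ico (0:ℝ) 1) (hcont : ContinuousOn f (Icc c d))
    (hfree : ∀ s ∈ iterSingularSet f S (k + 1), s ∉ Ioc c d) :
    ∀ s ∈ iterSingularSet f S k, s ∉ Ioc (f c) (f d) := by
  rintro s ⟨-, j, hj, hjs⟩ hs
  obtain ⟨u, hu, rfl⟩ := intermediate_value_Icc hcd hcont (Ioc_subset_Icc_self hs)
  have hcu : c < u := hu.1.lt_of_ne (by rintro rfl; exact hs.1.ne rfl)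
  exact hfree u ⟨⟨hc.1.trans hu.1, hu.2.trans_lt hd.2⟩, j + 1, by omega, hjs⟩ ⟨hcu, hu.2⟩

theorem IsPiecewiseContraction.iterate_monotoneOn_lipschitzOnWith_Icc
    (hf : IsPiecewiseContraction f S lam) (hmap : MapsTo f (Ico 0 1) (Ico 0 1)) (k : ℕ) :
    ∀ c d, c ∈ Ico (0:ℝ) 1 → d ∈ Ico (0:ℝ) 1 → c ≤ d →
      (∀ s ∈ iterSingularSet f S k, s ∉ Ioc c d) →
      MonotoneOn f^[k] (Icc c d) ∧ LipschitzOnWith (lam.toNNReal ^ k) f^[k] (Icc c d) := by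
  induction k with
  | zero => exact fun _ _ _ _ _ _ => ⟨monotoneOn_id, by simpa using LipschitzWith.id.lipschitzOnWith⟩
  | succ k ih =>
    intro c d hc hd hcd hfree
    have hS : ∀ s ∈ S, s ∉ Ioc c d := fun s hs hscd =>
      hfree s ⟨⟨hc.1.trans hscd.1.le, hscd.2.trans_lt hd.2⟩, 0, k.succ_pos, hs⟩ hscd
    have hmono := (hf.strictMonoOn_Icc hc hd hS).monotoneOn
    have hlip := hf.lipschitzOnWith_Icc hc hd hS
    obtain ⟨ihmono, ihlip⟩ := ih (f c) (f d) (hmap hc) (hmap hd) (hmono.mapsTo_Icc ⟨hcd, le_rfl⟩).1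
      (notMem_Ioc_image_of_mem_iterSingularSet hcd hc hd hlip.continuousOn hfree)
    rw [iterate_succ, pow_succ]
    exact ⟨ihmono.comp hmono hmono.mapsTo_Icc, ihlip.comp hlip hmono.mapsTo_Icc⟩

theorem IsPiecewiseContraction.iterate_monotoneOn_lipschitzOnWith_uIcc
    (hf : IsPiecewiseContraction f S lam) (hmap : MapsTo f (Ico 0 1) (Ico 0 1)) {k : ℕ}
    (hc : c ∈ Ico (0:ℝ) 1) (hd : d ∈ Ico (0:ℝ) 1)
    (hfree : ∀ s ∈ iterSingularSet f S k, s ∉ uIoc c d) :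
    MonotoneOn f^[k] (uIcc c d) ∧ LipschitzOnWith (lam.toNNReal ^ k) f^[k] (uIcc c d) :=
  hf.iterate_monotoneOn_lipschitzOnWith_Icc hmap k _ _
    (by rcases min_choice c d with h | h <;> rw [h] <;> assumption)
    (by rcases max_choice c d with h | h <;> rw [h] <;> assumption) min_le_max hfree

end PiecewiseContraction

theorem mem_uIcc_of_monotoneOn_of_lipschitzOnWith {g : ℝ → ℝ} {a b : ℝ} {K : NNReal}
    (hK : K ≤ 1) (hmono : MonotoneOn g (uIcc a b)) (hlip : LipschitzOnWith K g (uIcc a b))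
    (ha : g a = a) : g b ∈ uIcc a b := by
  have hdist : |g b - a| ≤ |b - a| := by
    simpa [Real.dist_eq, ha] using (hlip.dist_le_mul b right_mem_uIcc a left_mem_uIcc).trans
      (mul_le_of_le_one_left dist_nonneg hK)
  rcases le_total a b with hab | hba
  · have hgb : a ≤ g b := ha ▸ hmono left_mem_uIcc right_mem_uIcc hab
    rw [abs_of_nonneg (by linarith), abs_of_nonneg (by linarith)] at hdist
    exact uIcc_of_le hab ▸ ⟨hgb, by linarith⟩
  · have hgb : g b ≤ a := ha ▸ hmono right_mem_uIcc left_mem_uIcc hba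
    rw [abs_of_nonpos (by linarith), abs_of_nonpos (by linarith)] at hdist
    exact uIcc_of_ge hba ▸ ⟨by linarith, hgb⟩

theorem omegaSet_eq_range_of_tendsto_dist {f : ℝ → ℝ} {p : ℕ} {x z : ℝ} (hp : 0 < p)
    (hx : IsPeriodicPt f p x)
    (hzx : Tendsto (fun n => dist (f^[n] z) (f^[n] x)) atTop (𝓝 0)) :
    omegaSet f z = range fun n => f^[n] x := by
  ext y
  constructor
  · intro hy
    obtain ⟨ψ, hψy, hψ⟩ := MapClusterPt.exists_seq_tendsto hy
    have horbit_closed : IsClosed (range fun n => f^[n] x) := by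
      refine ((finite_Iio p).image fun n => f^[n] x).subset ?_ |>.isClosed
      rintro _ ⟨n, rfl⟩
      exact ⟨n % p, Nat.mod_lt n hp, hx.iterate_mod_apply n⟩
    exact horbit_closed.mem_of_tendsto (hψy.congr_dist (hzx.comp hψ))
      (Eventually.of_forall fun k => mem_range_self (ψ k))
  · rintro ⟨m, rfl⟩
    have hshift : Tendsto (fun k => k * p + m) atTop atTop :=
      tendsto_atTop_mono (fun k => Nat.le_add_right_of_le (Nat.le_mul_of_pos_right k hp))
        tendsto_id
    have hxk : ∀ k, f^[k * p + m] x = f^[m] x := fun k => by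
      rw [add_comm, iterate_add_apply, mul_comm, (hx.mul_const k).eq]
    have hconv : Tendsto (fun k => f^[k * p + m] z) atTop (𝓝 (f^[m] x)) := by
      rw [tendsto_iff_dist_tendsto_zero]
      simpa only [comp_def, hxk] using hzx.comp hshift
    exact MapClusterPt.of_comp hshift hconv.mapClusterPt

section Piece

variable {f : ℝ → ℝ} {S : Set ℝ} {lam x : ℝ} {p : ℕ}

theorem IsPiecewiseContraction.iterate_monotoneOn_lipschitzOnWith_of_mem_pieceOf
    (hf : IsPiecewiseContraction f S lam) (hmap : MapsTo f (Ico 0 1) (Ico 0 1))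
    (hx : x ∈ Ico (0:ℝ) 1) {w : ℝ} (hw : w ∈ pieceOf f S p x) {k : ℕ} (hk : k ≤ p) :
    MonotoneOn f^[k] (uIcc x w) ∧ LipschitzOnWith (lam.toNNReal ^ k) f^[k] (uIcc x w) :=
  hf.iterate_monotoneOn_lipschitzOnWith_uIcc hmap hx hw.1
    fun s ⟨hs, j, hj, hjs⟩ => hw.2 s ⟨hs, j, hj.trans_le hk, hjs⟩

theorem IsPiecewiseContraction.mapsTo_pieceOf (hf : IsPiecewiseContraction f S lam)
    (hlam : lam ≤ 1) (hmap : MapsTo f (Ico 0 1) (Ico 0 1)) (hx : x ∈ Ico (0:ℝ) 1)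
    (hxper : f^[p] x = x) : MapsTo f^[p] (pieceOf f S p x) (pieceOf f S p x) := by
  intro w hw
  obtain ⟨hmono, hlip⟩ := hf.iterate_monotoneOn_lipschitzOnWith_of_mem_pieceOf hmap hx hw le_rfl
  have hbetween : f^[p] w ∈ uIcc x w := mem_uIcc_of_monotoneOn_of_lipschitzOnWith
    (pow_le_one₀ zero_le (Real.toNNReal_le_one.mpr hlam)) hmono hlip hxper
  exact ⟨hmap.iterate p hw.1, fun s hs hsw =>
    hw.2 s hs (uIoc_subset_uIoc_of_uIcc_subset_uIcc (uIcc_subset_uIcc_left hbetween) hsw)⟩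

theorem IsPiecewiseContraction.dist_iterate_le_of_mem_pieceOf
    (hf : IsPiecewiseContraction f S lam) (hlam0 : 0 ≤ lam) (hlam1 : lam ≤ 1)
    (hmap : MapsTo f (Ico 0 1) (Ico 0 1)) (hx : x ∈ Ico (0:ℝ) 1) (hp : 0 < p)
    (hxper : f^[p] x = x) {z : ℝ} (hz : z ∈ pieceOf f S p x) (n : ℕ) :
    dist (f^[n] z) (f^[n] x) ≤ lam ^ n * dist z x := by
  have hstep : ∀ w ∈ pieceOf f S p x, ∀ k ≤ p,
      dist (f^[k] w) (f^[k] x) ≤ lam ^ k * dist w x := fun w hw k hk => by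
    simpa [Real.coe_toNNReal _ hlam0] using
      (hf.iterate_monotoneOn_lipschitzOnWith_of_mem_pieceOf hmap hx hw hk).2.dist_le_mul
        w right_mem_uIcc x left_mem_uIcc
  have hperiods : ∀ q, f^[q * p] z ∈ pieceOf f S p x ∧
      dist (f^[q * p] z) x ≤ lam ^ (q * p) * dist z x := by
    intro q
    induction q with
    | zero => simpa using hz
    | succ q ih =>
      rw [add_one_mul, add_comm, iterate_add_apply, pow_add]
      refine ⟨hf.mapsTo_pieceOf hlam1 hmap hx hxper ih.1, ?_⟩
      calc dist (f^[p] (f^[q * p] z)) x ≤ lam ^ p * dist (f^[q * p] z) x := by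
            simpa [hxper] using hstep _ ih.1 p le_rfl
        _ ≤ lam ^ p * (lam ^ (q * p) * dist z x) := by gcongr; exact ih.2
        _ = lam ^ p * lam ^ (q * p) * dist z x := by ring
  obtain ⟨hmem, hdist⟩ := hperiods (n / p)
  have hn : n = n % p + n / p * p := (Nat.mod_add_div' n p).symm
  calc dist (f^[n] z) (f^[n] x)
      = dist (f^[n % p] (f^[n / p * p] z)) (f^[n % p] x) := by
        rw [← iterate_add_apply, ← hn, (show IsPeriodicPt f p x from hxper).iterate_mod_apply]
    _ ≤ lam ^ (n % p) * dist (f^[n / p * p] z) x := hstep _ hmem _ (Nat.mod_lt n hp).le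
    _ ≤ lam ^ (n % p) * (lam ^ (n / p * p) * dist z x) := by gcongr
    _ = lam ^ n * dist z x := by rw [← mul_assoc, ← pow_add, ← hn]

end Piece

theorem stmt_18_general (f : ℝ → ℝ) (S : Set ℝ) (lam : ℝ)
    (hlam0 : 0 < lam) (hlam1 : lam < 1)
    (hmap : Set.MapsTo f (Set.Ico 0 1) (Set.Ico 0 1))
    (hpiece : ∀ x ∈ Set.Ico (0:ℝ) 1, ∀ y ∈ Set.Ico (0:ℝ) 1, x < y →
      (∀ s ∈ S, s ∉ Set.Ioc x y) → f x < f y ∧ f y - f x ≤ lam * (y - x))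
    (x : ℝ) (hx : x ∈ Set.Ico (0:ℝ) 1) (p : ℕ) (hp : 1 ≤ p) (hxper : f^[p] x = x) :
    Set.MapsTo (f^[p])
      {y | y ∈ Set.Ico (0:ℝ) 1 ∧ ∀ s,
        (s ∈ Set.Ico (0:ℝ) 1 ∧ ∃ j < p, f^[j] s ∈ S) →
        s ∉ Set.Ioc (min x y) (max x y)}
      {y | y ∈ Set.Ico (0:ℝ) 1 ∧ ∀ s,
        (s ∈ Set.Ico (0:ℝ) 1 ∧ ∃ j < p, f^[j] s ∈ S) →
        s ∉ Set.Ioc (min x y) (max x y)} ∧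
    ∀ z ∈ {y | y ∈ Set.Ico (0:ℝ) 1 ∧ ∀ s,
        (s ∈ Set.Ico (0:ℝ) 1 ∧ ∃ j < p, f^[j] s ∈ S) →
        s ∉ Set.Ioc (min x y) (max x y)},
      omegaSet f z = Set.range fun n => f^[n] x := by
  have hf : IsPiecewiseContraction f S lam := hpiece
  refine ⟨hf.mapsTo_pieceOf hlam1.le hmap hx hxper, fun z hz => ?_⟩
  refine omegaSet_eq_range_of_tendsto_dist hp hxper
    (squeeze_zero (fun _ => dist_nonneg)
      (hf.dist_iterate_le_of_mem_pieceOf hlam0.le hlam1.le hmap hx hp hxper hz) ?_)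
  simpa using (tendsto_pow_atTop_nhds_zero_of_lt_one hlam0.le hlam1).mul_const (dist z x)

/-- Let `f` be a piecewise increasing λ-contraction of `[0,1)` with
finite singular set `S` and `Q = ⋃_{n≥0} f^{-n}(S)` finite.  If `x` is a periodic
point of period `p`, then the piece `W` of the partition of `[0,1)` induced by
`S⁽ᵖ⁾ = ⋃_{j<p} f^{-j}(S)` containing `x` (the set of points not separated from `x`
by any point of `S⁽ᵖ⁾`) satisfies `f^[p] W ⊆ W`, and `ω(f,z) = O(f,x)` for every
`z ∈ W`. -/
theorem stmt_18 (f : ℝ → ℝ) (S : Set ℝ) (lam : ℝ)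
    (hlam0 : 0 < lam) (hlam1 : lam < 1)
    (hSfin : S.Finite) (hS0 : (0:ℝ) ∈ S) (hSsub : S ⊆ Set.Ico 0 1)
    (hmap : Set.MapsTo f (Set.Ico 0 1) (Set.Ico 0 1))
    (hrc : ∀ x ∈ Set.Ico (0:ℝ) 1, ContinuousWithinAt f (Set.Ici x) x)
    (hpiece : ∀ x ∈ Set.Ico (0:ℝ) 1, ∀ y ∈ Set.Ico (0:ℝ) 1, x < y →
      (∀ s ∈ S, s ∉ Set.Ioc x y) → f x < f y ∧ f y - f x ≤ lam * (y - x))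
    (hQfin : {x | x ∈ Set.Ico (0:ℝ) 1 ∧ ∃ n : ℕ, f^[n] x ∈ S}.Finite)
    (x : ℝ) (hx : x ∈ Set.Ico (0:ℝ) 1) (p : ℕ) (hp : 1 ≤ p) (hxper : f^[p] x = x) :
    Set.MapsTo (f^[p])
      {y | y ∈ Set.Ico (0:ℝ) 1 ∧ ∀ s,
        (s ∈ Set.Ico (0:ℝ) 1 ∧ ∃ j < p, f^[j] s ∈ S) →
        s ∉ Set.Ioc (min x y) (max x y)}
      {y | y ∈ Set.Ico (0:ℝ) 1 ∧ ∀ s,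
        (s ∈ Set.Ico (0:ℝ) 1 ∧ ∃ j < p, f^[j] s ∈ S) →
        s ∉ Set.Ioc (min x y) (max x y)} ∧
    ∀ z ∈ {y | y ∈ Set.Ico (0:ℝ) 1 ∧ ∀ s,
        (s ∈ Set.Ico (0:ℝ) 1 ∧ ∃ j < p, f^[j] s ∈ S) →
        s ∉ Set.Ioc (min x y) (max x y)},
      omegaSet f z = Set.range fun n => f^[n] x :=
  stmt_18_general f S lam hlam0 hlam1 hmap hpiece x hx p hp hxper
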